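/- In the Black-Scholes setting with zero dividend yield q = 0 and interest rate r ≥ 0, for fixed S, K, σ > 0 the function T ↦ C(S,K,T,r,0,σ) is differentiable on (0, ∞) with ∂C/∂T > 0; consequently, for any maturities 0 < T1 < T2 the calendar-spread no-arbitrage condition holds: C(S,K,T2,r,0,σ) > C(S,K,T1,r,0,σ). -/
import Mathlib


open Real

/-- Standard normal density. -/
noncomputable def stdNormalPdf (x : ℝ) : ℝ := Real.exp (-x ^ 2 / 2) / Real.sqrt (2 * Real.pi)

/-- Standard normal cumulative distribution function. -/
noncomputable def stdNormalCdf (x : ℝ) : ℝ := ∫ t in Set.Iic x, stdNormalPdf t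

/-- Black-Scholes `d₁`. -/
noncomputable def bsD1 (S K T r q σ : ℝ) : ℝ :=
  (Real.log (S / K) + (r - q + σ ^ 2 / 2) * T) / (σ * Real.sqrt T)

/-- Black-Scholes `d₂`. -/
noncomputable def bsD2 (S K T r q σ : ℝ) : ℝ := bsD1 S K T r q σ - σ * Real.sqrt T

/-- Black-Scholes call option price. -/
noncomputable def bsCall (S K T r q σ : ℝ) : ℝ :=
  S * Real.exp (-q * T) * stdNormalCdf (bsD1 S K T r q σ) -
    K * Real.exp (-r * T) * stdNormalCdf (bsD2 S K T r q σ)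

lemma continuous_stdNormalPdf : Continuous stdNormalPdf := by
  unfold stdNormalPdf; fun_prop

lemma stdNormalPdf_pos (x : ℝ) : 0 < stdNormalPdf x := by
  unfold stdNormalPdf; positivity

lemma stdNormalCdf_nonneg (x : ℝ) : 0 ≤ stdNormalCdf x :=
  MeasureTheory.setIntegral_nonneg measurableSet_Iic fun y _ => (stdNormalPdf_pos y).le

lemma integrable_stdNormalPdf : MeasureTheory.Integrable stdNormalPdf := by
  have h : stdNormalPdf = fun x => Real.exp (-(1/2) * x ^ 2) / Real.sqrt (2 * Real.pi) := by
    funext x; unfold stdNormalPdf; ring_nf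
  rw [h]
  exact (integrable_exp_neg_mul_sq (by norm_num)).div_const _

lemma hasDerivAt_stdNormalCdf (x : ℝ) : HasDerivAt stdNormalCdf (stdNormalPdf x) x := by
  have hfun : stdNormalCdf = fun y => stdNormalCdf 0 + ∫ t in (0:ℝ)..y, stdNormalPdf t := by
    funext y
    rw [stdNormalCdf, stdNormalCdf, ← intervalIntegral.integral_Iic_sub_Iic
      integrable_stdNormalPdf.integrableOn integrable_stdNormalPdf.integrableOn]
    ring
  rw [hfun]
  exact (hasDerivAt_const x _).add
    ((continuous_stdNormalPdf.integral_hasStrictDerivAt 0 x).hasDerivAt)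
  |>.congr_deriv (by ring)

lemma bsCall_hasDerivAt (S K σ r : ℝ) (hS : 0 < S) (hK : 0 < K) (hσ : 0 < σ)
    (T : ℝ) (hT : 0 < T) :
    HasDerivAt (fun t => bsCall S K t r 0 σ)
      (S * stdNormalPdf (bsD1 S K T r 0 σ) * (σ / (2 * Real.sqrt T)) +
        r * K * Real.exp (-r * T) * stdNormalCdf (bsD2 S K T r 0 σ)) T := by
  set L := Real.log (S / K) with hL
  set a := r - 0 + σ ^ 2 / 2 with ha
  have hsT : 0 < Real.sqrt T := Real.sqrt_pos.mpr hT
  have hv : σ * Real.sqrt T ≠ 0 := by positivity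
  -- derivative of d1
  have hnum : HasDerivAt (fun t : ℝ => L + a * t) (a * 1) T :=
    ((hasDerivAt_id T).const_mul a).const_add L
  have hden : HasDerivAt (fun t : ℝ => σ * Real.sqrt t) (σ * (1 / (2 * Real.sqrt T))) T :=
    (Real.hasDerivAt_sqrt hT.ne').const_mul σ
  have h1 : HasDerivAt (fun t => bsD1 S K t r 0 σ)
      ((a * 1 * (σ * Real.sqrt T) - (L + a * T) * (σ * (1 / (2 * Real.sqrt T)))) /
        (σ * Real.sqrt T) ^ 2) T := by
    have := hnum.div hden hv
    exact this
  set D1 := (a * 1 * (σ * Real.sqrt T) - (L + a * T) * (σ * (1 / (2 * Real.sqrt T)))) /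
        (σ * Real.sqrt T) ^ 2 with hD1
  have h2 : HasDerivAt (fun t => bsD2 S K t r 0 σ) (D1 - σ * (1 / (2 * Real.sqrt T))) T := by
    have := h1.sub hden
    exact this
  have hN1 : HasDerivAt (fun t => stdNormalCdf (bsD1 S K t r 0 σ))
      (stdNormalPdf (bsD1 S K T r 0 σ) * D1) T :=
    (hasDerivAt_stdNormalCdf _).comp T h1
  have hN2 : HasDerivAt (fun t => stdNormalCdf (bsD2 S K t r 0 σ))
      (stdNormalPdf (bsD2 S K T r 0 σ) * (D1 - σ * (1 / (2 * Real.sqrt T)))) T :=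
    (hasDerivAt_stdNormalCdf _).comp T h2
  have hexp : HasDerivAt (fun t : ℝ => Real.exp (-r * t)) (Real.exp (-r * T) * (-r * 1)) T :=
    ((hasDerivAt_id T).const_mul (-r)).exp
  have hfun : (fun t => bsCall S K t r 0 σ) =
      fun t => S * stdNormalCdf (bsD1 S K t r 0 σ) -
        K * Real.exp (-r * t) * stdNormalCdf (bsD2 S K t r 0 σ) := by
    funext t; simp [bsCall]
  have hC := (hN1.const_mul S).sub (((hexp.const_mul K).mul hN2))
  rw [hfun]
  have hC' : HasDerivAt (fun t => S * stdNormalCdf (bsD1 S K t r 0 σ) -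
        K * Real.exp (-r * t) * stdNormalCdf (bsD2 S K t r 0 σ))
      (S * (stdNormalPdf (bsD1 S K T r 0 σ) * D1) -
        (K * (Real.exp (-r * T) * (-r * 1)) * stdNormalCdf (bsD2 S K T r 0 σ) +
          K * Real.exp (-r * T) *
            (stdNormalPdf (bsD2 S K T r 0 σ) * (D1 - σ * (1 / (2 * Real.sqrt T)))))) T := hC
  refine hC'.congr_deriv ?_
  -- key identity: S * φ(d1) = K * e^{-rT} * φ(d2)
  have hd1v : bsD1 S K T r 0 σ * (σ * Real.sqrt T) = L + a * T := by
    rw [hL, ha, bsD1]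
    exact div_mul_cancel₀ _ hv
  have hv2 : (σ * Real.sqrt T) ^ 2 = σ ^ 2 * T := by
    rw [mul_pow, Real.sq_sqrt hT.le]
  have hd2 : bsD2 S K T r 0 σ = bsD1 S K T r 0 σ - σ * Real.sqrt T := rfl
  have hLlog : L = Real.log S - Real.log K := Real.log_div hS.ne' hK.ne'
  have key : ∀ x : ℝ, x * (σ * Real.sqrt T) = L + a * T →
      S * Real.exp (-x ^ 2 / 2) =
        K * Real.exp (-r * T) * Real.exp (-(x - σ * Real.sqrt T) ^ 2 / 2) := by
    intro x hx
    have expand : (x - σ * Real.sqrt T) ^ 2 = x ^ 2 - 2 * (L + a * T) + σ ^ 2 * T := by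
      rw [sub_sq, mul_assoc, hx, hv2]
    rw [← Real.exp_log hS, ← Real.exp_log hK]
    rw [← Real.exp_add, ← Real.exp_add, ← Real.exp_add, Real.exp_eq_exp]
    rw [expand, hLlog, ha]
    ring
  have hid : S * stdNormalPdf (bsD1 S K T r 0 σ) =
      K * Real.exp (-r * T) * stdNormalPdf (bsD2 S K T r 0 σ) := by
    unfold stdNormalPdf
    rw [← mul_div_assoc, ← mul_div_assoc, hd2, key _ hd1v]
  linear_combination (D1 - σ * (1 / (2 * Real.sqrt T))) * hid


/-- Calendar-spread no-arbitrage condition: with zero dividend yield and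
nonnegative interest rate, the Black-Scholes call price is differentiable and
strictly increasing in the maturity. -/
theorem bsCall_calendar_spread (S K σ r : ℝ) (hS : 0 < S) (hK : 0 < K) (hσ : 0 < σ)
    (hr : 0 ≤ r) :
    (∀ T : ℝ, 0 < T →
      DifferentiableAt ℝ (fun t => bsCall S K t r 0 σ) T ∧
      0 < deriv (fun t => bsCall S K t r 0 σ) T) ∧
    (∀ T1 T2 : ℝ, 0 < T1 → T1 < T2 →
      bsCall S K T1 r 0 σ < bsCall S K T2 r 0 σ) := by
  have h1 : ∀ T : ℝ, 0 < T →
      DifferentiableAt ℝ (fun t => bsCall S K t r 0 σ) T ∧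
      0 < deriv (fun t => bsCall S K t r 0 σ) T := by
    intro T hT
    have hD := bsCall_hasDerivAt S K σ r hS hK hσ T hT
    refine ⟨hD.differentiableAt, ?_⟩
    rw [hD.deriv]
    have hsT : 0 < Real.sqrt T := Real.sqrt_pos.mpr hT
    have t1 : 0 < S * stdNormalPdf (bsD1 S K T r 0 σ) * (σ / (2 * Real.sqrt T)) := by
      have := stdNormalPdf_pos (bsD1 S K T r 0 σ)
      positivity
    have t2 : 0 ≤ r * K * Real.exp (-r * T) * stdNormalCdf (bsD2 S K T r 0 σ) := by
      have := stdNormalCdf_nonneg (bsD2 S K T r 0 σ)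
      positivity
    linarith
  refine ⟨h1, ?_⟩
  intro T1 T2 hT1 hT12
  have hmono : StrictMonoOn (fun t => bsCall S K t r 0 σ) (Set.Ioi 0) := by
    apply strictMonoOn_of_deriv_pos (convex_Ioi 0)
    · intro x hx
      exact ((h1 x hx).1.continuousAt).continuousWithinAt
    · intro x hx
      rw [interior_Ioi] at hx
      exact (h1 x hx).2
  exact hmono hT1 (lt_trans hT1 hT12) hT12
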